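/- arXiv:2510.05724 — 4 statements merged into one kernel-verified Lean document; each statement's English description precedes it below -/
import Mathlib

section
/- Let d ≥ 2 be an integer such that every P5-free graph G satisfies α(G)·ω(G)^d ≥ |G|. Then every nonempty P5-free graph G satisfies χ*(G) ≤ ω(G)^d. -/
/-!
By LP duality, `χ*(G) ≤ t` as soon as every nonnegative vertex weighting has a stable set
carrying at least a `1/t` fraction of the total weight. For integer weights `c` this is the
hypothesis applied to the blow-up of `G` replacing each vertex `v` by `c v` nonadjacent copies:
the blow-up is still `P₅`-free because `P₅` has no nonadjacent twins, its clique number is at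
most `ω(G)`, and its stable sets project onto stable sets of `G` of at least the same weight.
Real weights reduce to integer ones by scaling and rounding up.
-/

open SimpleGraph

/-- The five-vertex path `P₅`. -/
def P5 : SimpleGraph (Fin 5) := SimpleGraph.fromRel (fun i j => (i : ℕ) + 1 = (j : ℕ))

/-- A graph is `P₅`-free if it contains no induced copy of `P5`
(equivalently, no graph embedding of `P5`). -/
def P5Free {V : Type*} (G : SimpleGraph V) : Prop := IsEmpty (P5 ↪g G)

/-- A graph is `T`-free if it contains no induced copy of `T`. -/
def TFree {W V : Type*} (T : SimpleGraph W) (G : SimpleGraph V) : Prop := IsEmpty (T ↪g G)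

/-- A stable (independent) set of vertices. -/
def IsStableSet {V : Type*} (G : SimpleGraph V) (s : Finset V) : Prop :=
  ∀ ⦃u⦄, u ∈ s → ∀ ⦃v⦄, v ∈ s → ¬ G.Adj u v

/-- The stability number `α(G)`. -/
noncomputable def alphaNum {V : Type*} [Fintype V] (G : SimpleGraph V) : ℕ :=
  sSup {n | ∃ s : Finset V, IsStableSet G s ∧ s.card = n}

/-- The clique number `ω(G)`. -/
noncomputable def omegaNum {V : Type*} [Fintype V] (G : SimpleGraph V) : ℕ :=
  sSup {n | ∃ s : Finset V, G.IsClique (s : Set V) ∧ s.card = n}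

/-- `ψ(G) = |G| / α(G)` (and `0` for the null graph). -/
noncomputable def psi {V : Type*} [Fintype V] (G : SimpleGraph V) : ℝ :=
  if Fintype.card V = 0 then 0 else (Fintype.card V : ℝ) / (alphaNum G : ℝ)

/-- `ψ(S)` for a vertex subset `S`, i.e. `ψ(G[S])`. -/
noncomputable def psiSub {V : Type*} [Fintype V] (G : SimpleGraph V) (s : Finset V) : ℝ :=
  psi (G.induce (↑s : Set V))

/-- The Hall ratio `ρ(G)`: the maximum of `ψ(F)` over induced subgraphs `F` of `G`. -/
noncomputable def rho {V : Type*} [Fintype V] (G : SimpleGraph V) : ℝ :=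
  ⨆ s : Finset V, psiSub G s

/-- `ρ(S)` for a vertex subset `S`, i.e. `ρ(G[S])`. -/
noncomputable def rhoSub {V : Type*} [Fintype V] (G : SimpleGraph V) (s : Finset V) : ℝ :=
  rho (G.induce (↑s : Set V))

/-- `(A, B)` is a complete pair: disjoint, with every vertex of `A` adjacent to every
vertex of `B`. -/
def CompletePair {V : Type*} (G : SimpleGraph V) (A B : Finset V) : Prop :=
  Disjoint A B ∧ ∀ a ∈ A, ∀ b ∈ B, G.Adj a b

/-- `(A, B)` is an anticomplete pair: disjoint, with no edges between `A` and `B`. -/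
def AnticompletePair {V : Type*} (G : SimpleGraph V) (A B : Finset V) : Prop :=
  Disjoint A B ∧ ∀ a ∈ A, ∀ b ∈ B, ¬ G.Adj a b

/-- A complete blockade: pairwise disjoint sets, pairwise complete to each other. -/
def CompleteBlockade {V : Type*} (G : SimpleGraph V) {k : ℕ} (B : Fin k → Finset V) : Prop :=
  (∀ i j, i ≠ j → Disjoint (B i) (B j)) ∧
  (∀ i j, i ≠ j → ∀ a ∈ B i, ∀ b ∈ B j, G.Adj a b)

/-- An anticomplete blockade: pairwise disjoint sets, pairwise anticomplete to each other. -/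
def AnticompleteBlockade {V : Type*} (G : SimpleGraph V) {k : ℕ} (B : Fin k → Finset V) : Prop :=
  (∀ i j, i ≠ j → Disjoint (B i) (B j)) ∧
  (∀ i j, i ≠ j → ∀ a ∈ B i, ∀ b ∈ B j, ¬ G.Adj a b)

/-- The fractional chromatic number `χ*(G)`: the least `q ≥ 0` for which there are
nonnegative weights on the stable sets summing to `q` that cover every vertex with
total weight at least `1`. -/
noncomputable def fracChrom {V : Type*} [Fintype V] [DecidableEq V] (G : SimpleGraph V) : ℝ :=
  sInf {q : ℝ | 0 ≤ q ∧ ∃ x : Finset V → ℝ,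
    (∀ s, 0 ≤ x s) ∧ (∀ s, ¬ IsStableSet G s → x s = 0) ∧
    (∑ s : Finset V, x s) = q ∧
    ∀ v : V, 1 ≤ ∑ s ∈ Finset.univ.filter (fun s : Finset V => v ∈ s), x s}

/-- `G` is `ε`-sparse: every vertex has degree at most `ε·|G|`. -/
def EpsSparse {V : Type*} [Fintype V] (ε : ℝ) (G : SimpleGraph V) : Prop :=
  ∀ v : V, ((G.neighborSet v).ncard : ℝ) ≤ ε * (Fintype.card V : ℝ)

/-- `G` is `(1-ε)`-dense: the complement of `G` is `ε`-sparse. -/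
def OneSubEpsDense {V : Type*} [Fintype V] (ε : ℝ) (G : SimpleGraph V) : Prop :=
  EpsSparse ε Gᶜ

/-- `G` is `ε`-restricted: `ε`-sparse or `(1-ε)`-dense. -/
def EpsRestricted {V : Type*} [Fintype V] (ε : ℝ) (G : SimpleGraph V) : Prop :=
  EpsSparse ε G ∨ OneSubEpsDense ε G

/-- `G` is `(p,q)`-sparse: every induced subgraph `F` with `ρ(F) ≥ q` contains an
anticomplete pair `(X,Y)` with `ρ(X), ρ(Y) ≥ p`. -/
def PQSparse {V : Type*} [Fintype V] (G : SimpleGraph V) (p q : ℝ) : Prop :=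
  ∀ s : Finset V, q ≤ rhoSub G s →
    ∃ X Y : Finset V, X ⊆ s ∧ Y ⊆ s ∧ AnticompletePair G X Y ∧
      p ≤ rhoSub G X ∧ p ≤ rhoSub G Y

/-- `φ_s = ∏_{i=1}^{s} (1 - 2^{-2^{i+1}})` (so `φ_0 = 1`). -/
noncomputable def phi (s : ℕ) : ℝ :=
  ∏ i ∈ Finset.Icc 1 s, (1 - ((2:ℝ) ^ (2 ^ (i+1)))⁻¹)

/-- `φ_{r,s} = φ_s / φ_r`. -/
noncomputable def phiRS (r s : ℕ) : ℝ := phi s / phi r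


open Finset

theorem P5_eq_of_not_adj_of_forall_adj_iff ⦃a b : Fin 5⦄ (hab : ¬P5.Adj a b)
    (htwin : ∀ k, P5.Adj a k ↔ P5.Adj b k) : a = b := by
  revert a b
  simp only [P5, fromRel_adj]
  decide

theorem le_omegaNum {V : Type*} [Fintype V] {G : SimpleGraph V} {s : Finset V}
    (hs : G.IsClique (s : Set V)) : s.card ≤ omegaNum G :=
  le_csSup ⟨Fintype.card V, fun _ ⟨t, _, ht⟩ => ht ▸ t.card_le_univ⟩ ⟨s, hs, rfl⟩

theorem exists_isStableSet_card_eq_alphaNum {V : Type*} [Fintype V] (G : SimpleGraph V) :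
    ∃ s, IsStableSet G s ∧ s.card = alphaNum G :=
  Nat.sSup_mem (s := {n | ∃ s : Finset V, IsStableSet G s ∧ s.card = n})
    ⟨0, ∅, fun _ hu => absurd hu (notMem_empty _), rfl⟩
    ⟨Fintype.card V, fun _ ⟨t, _, ht⟩ => ht ▸ t.card_le_univ⟩

namespace SimpleGraph

variable {V : Type*} (G : SimpleGraph V) (c : V → ℕ)

def blowup : SimpleGraph (Σ v : V, Fin (c v)) := G.comap Sigma.fst

@[simp]
theorem blowup_adj {a b : Σ v : V, Fin (c v)} : (G.blowup c).Adj a b ↔ G.Adj a.1 b.1 := Iff.rfl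

/-- A blow-up contains a copy of `T` only through two nonadjacent twins of `T`. -/
theorem tFree_blowup {W : Type*} {T : SimpleGraph W}
    (hT : ∀ ⦃a b⦄, ¬T.Adj a b → (∀ k, T.Adj a k ↔ T.Adj b k) → a = b) (hG : TFree T G) :
    TFree T (G.blowup c) := by
  refine ⟨fun e => hG.elim ⟨⟨fun i => (e i).1, fun i j hij => ?_⟩, e.map_adj_iff⟩⟩
  have hadj : ∀ k l, G.Adj (e k).1 (e l).1 ↔ T.Adj k l := fun _ _ => e.map_adj_iff
  simp only at hij
  refine hT (fun h => ?_) fun k => ?_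
  · simpa [hij] using (hadj i j).2 h
  · rw [← hadj, ← hadj, hij]

theorem omegaNum_blowup_le [Fintype V] : omegaNum (G.blowup c) ≤ omegaNum G := by
  classical
  refine csSup_le' fun _ ⟨s, hs, hcard⟩ => hcard ▸ ?_
  have hinj : Set.InjOn Sigma.fst (s : Set (Σ v, Fin (c v))) := fun a ha b hb hab => by
    by_contra hne
    have h := hs ha hb hne
    rw [blowup_adj, hab] at h
    exact G.irrefl h
  rw [← card_image_of_injOn hinj]
  refine le_omegaNum fun _ hx _ hy hxy => ?_
  obtain ⟨a, ha, rfl⟩ := mem_image.1 hx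
  obtain ⟨b, hb, rfl⟩ := mem_image.1 hy
  exact hs ha hb fun h => hxy (h ▸ rfl)

theorem exists_isStableSet_card_le_sum_of_blowup [DecidableEq V] {s : Finset (Σ v, Fin (c v))}
    (hs : IsStableSet (G.blowup c) s) : ∃ S, IsStableSet G S ∧ s.card ≤ ∑ v ∈ S, c v := by
  refine ⟨s.image Sigma.fst, fun u hu v hv => ?_, ?_⟩
  · obtain ⟨a, ha, rfl⟩ := mem_image.1 hu
    obtain ⟨b, hb, rfl⟩ := mem_image.1 hv
    exact hs ha hb
  · have hsub : s ⊆ (s.image Sigma.fst).sigma fun _ => univ := fun a ha =>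
      mem_sigma.2 ⟨mem_image_of_mem _ ha, mem_univ _⟩
    simpa using card_le_card hsub

theorem exists_isStableSet_sum_le_of_blowup [Fintype V] {k : ℕ}
    (hk : Fintype.card (Σ v, Fin (c v)) ≤ alphaNum (G.blowup c) * k) :
    ∃ S, IsStableSet G S ∧ ∑ v, c v ≤ (∑ v ∈ S, c v) * k := by
  classical
  obtain ⟨s, hs, hcard⟩ := exists_isStableSet_card_eq_alphaNum (G.blowup c)
  obtain ⟨S, hS, hsS⟩ := G.exists_isStableSet_card_le_sum_of_blowup c hs
  refine ⟨S, hS, ?_⟩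
  calc ∑ v, c v = Fintype.card (Σ v, Fin (c v)) := by simp
    _ ≤ alphaNum (G.blowup c) * k := hk
    _ ≤ (∑ v ∈ S, c v) * k := Nat.mul_le_mul_right k (hcard ▸ hsS)

end SimpleGraph

theorem exists_sum_le_mul_sum_of_nat_weights {V : Type*} [Fintype V] {P : Finset V → Prop} {t : ℝ}
    (ht : 0 ≤ t) (h : ∀ c : V → ℕ, ∃ S, P S ∧ ∑ v, (c v : ℝ) ≤ t * ∑ v ∈ S, (c v : ℝ))
    (w : V → ℝ) (hw : ∀ v, 0 ≤ w v) : ∃ S, P S ∧ ∑ v, w v ≤ t * ∑ v ∈ S, w v := by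
  by_contra! hlt
  obtain ⟨S₀, hS₀, -⟩ := h 0
  obtain ⟨S₁, hS₁, hmin⟩ := Set.exists_min_image {S | P S}
    (fun S => ∑ v, w v - t * ∑ v ∈ S, w v) (Set.toFinite _) ⟨S₀, hS₀⟩
  set ε := ∑ v, w v - t * ∑ v ∈ S₁, w v
  have hε : 0 < ε := sub_pos.2 (hlt S₁ hS₁)
  -- Rounding `N • w` up costs less than `1` per vertex, which is negligible against `N * ε`.
  obtain ⟨N, hN⟩ := exists_nat_gt (t * Fintype.card V / ε)
  have hNε : t * Fintype.card V < N * ε := by rwa [div_lt_iff₀ hε] at hN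
  obtain ⟨S, hS, hc⟩ := h fun v => ⌈N * w v⌉₊
  have hεS : ε ≤ ∑ v, w v - t * ∑ v ∈ S, w v := hmin S hS
  have hround : ∑ v ∈ S, (⌈N * w v⌉₊ : ℝ) ≤ N * ∑ v ∈ S, w v + Fintype.card V :=
    calc ∑ v ∈ S, (⌈N * w v⌉₊ : ℝ) ≤ ∑ v ∈ S, (N * w v + 1) :=
          sum_le_sum fun v _ => (Nat.ceil_lt_add_one (by have := hw v; positivity)).le
      _ ≤ N * ∑ v ∈ S, w v + Fintype.card V := by
          rw [sum_add_distrib, mul_sum, sum_const, nsmul_one]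
          gcongr
          exact S.card_le_univ
  have : N * ∑ v, w v < N * ∑ v, w v :=
    calc N * ∑ v, w v ≤ ∑ v, (⌈N * w v⌉₊ : ℝ) := by
          rw [mul_sum]; exact sum_le_sum fun v _ => Nat.le_ceil _
      _ ≤ t * ∑ v ∈ S, (⌈N * w v⌉₊ : ℝ) := hc
      _ ≤ t * (N * ∑ v ∈ S, w v + Fintype.card V) := by gcongr
      _ < N * (t * ∑ v ∈ S, w v + ε) := by nlinarith
      _ ≤ N * ∑ v, w v := by gcongr; linarith
  exact lt_irrefl _ this

theorem LinearMap.nonneg_of_lt_on_Ici {E : Type*} [AddCommGroup E] [PartialOrder E]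
    [IsOrderedAddMonoid E] [Module ℝ E] [PosSMulMono ℝ E] (f : E →ₗ[ℝ] ℝ) {y₀ : E} {m : ℝ}
    (hf : ∀ y ∈ Set.Ici y₀, m < f y) {z : E} (hz : 0 ≤ z) : 0 ≤ f z := by
  by_contra! hneg
  have hm : m < f y₀ := hf y₀ le_rfl
  have := hf (y₀ + ((f y₀ - m) / -f z) • z)
    (le_add_of_nonneg_right (smul_nonneg (div_nonneg (by linarith) (by linarith)) hz))
  rw [map_add, map_smul, smul_eq_mul, div_mul_eq_mul_div, div_neg, mul_div_cancel_right₀ _ hneg.ne]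
    at this
  linarith

section FractionalColouring

variable {V : Type*} [Fintype V] [DecidableEq V] {G : SimpleGraph V}

theorem fracChrom_le_of_cover {t : ℝ} (x : Finset V → ℝ) (hx : ∀ s, 0 ≤ x s)
    (hxG : ∀ s, ¬IsStableSet G s → x s = 0) (hsum : ∑ s, x s ≤ t)
    (hcover : ∀ v, 1 ≤ ∑ s ∈ univ.filter (fun s : Finset V => v ∈ s), x s) :
    fracChrom G ≤ t := by
  unfold fracChrom
  refine le_trans (csInf_le ⟨0, fun _ hq => hq.1⟩ ?_) hsum
  exact ⟨sum_nonneg fun s _ => hx s, x, hx, hxG, rfl, hcover⟩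

theorem fracChrom_le_of_forall_weight {t : ℝ} (ht : 0 ≤ t)
    (h : ∀ w : V → ℝ, (∀ v, 0 ≤ w v) → ∃ S, IsStableSet G S ∧ ∑ v, w v ≤ t * ∑ v ∈ S, w v) :
    fracChrom G ≤ t := by
  classical
  let x : (Finset V → ℝ) →ₗ[ℝ] Finset V → ℝ :=
    t • LinearMap.pi fun S => if IsStableSet G S then LinearMap.proj S else 0
  let cover : (Finset V → ℝ) →ₗ[ℝ] V → ℝ :=
    LinearMap.pi fun v => ∑ S ∈ univ.filter (fun S : Finset V => v ∈ S), LinearMap.proj S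
  have hx : ∀ μ S, x μ S = if IsStableSet G S then t * μ S else 0 := by
    intro μ S; by_cases hS : IsStableSet G S <;> simp [x, hS]
  have hcover : ∀ y v, cover y v = ∑ S ∈ univ.filter (fun S : Finset V => v ∈ S), y S := by
    intro y v; simp [cover]
  -- Either some fractional colouring of weight `t` meets the demands `Set.Ici 1`, or a
  -- functional separating the two sets is a weighting violating `h`.
  by_cases hmeet : ∃ μ ∈ stdSimplex ℝ (Finset V), 1 ≤ cover (x μ)
  · obtain ⟨μ, ⟨hμ0, hμ1⟩, hμ⟩ := hmeet
    refine fracChrom_le_of_cover (x μ) (fun S => ?_) (fun S hS => by simp [hx, hS]) ?_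
      fun v => hcover (x μ) v ▸ hμ v
    · rw [hx]; split_ifs; exacts [mul_nonneg ht (hμ0 S), le_rfl]
    · calc ∑ S, x μ S ≤ ∑ S, t * μ S := sum_le_sum fun S _ => by
            rw [hx]; split_ifs <;> nlinarith [hμ0 S]
        _ = t := by rw [← mul_sum, hμ1, mul_one]
  · have hdisj : Disjoint ((cover ∘ₗ x) '' stdSimplex ℝ (Finset V)) (Set.Ici 1) :=
      Set.disjoint_left.2 fun _ ⟨μ, hμ, hμx⟩ hle => hmeet ⟨μ, hμ, hμx ▸ hle⟩
    obtain ⟨f, u, u', hfD, hu, hfQ⟩ := geometric_hahn_banach_compact_closed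
      ((convex_stdSimplex ℝ _).linear_image _)
      ((isCompact_stdSimplex ℝ _).image (cover ∘ₗ x).continuous_of_finiteDimensional)
      (convex_Ici 1) isClosed_Ici hdisj
    let w : V → ℝ := fun a => f fun b => if a = b then 1 else 0
    have hf : ∀ y, f y = ∑ a, y a * w a := fun y => by
      simpa [w, mul_comm] using f.toLinearMap.pi_apply_eq_sum_univ y
    have hw : ∀ a, 0 ≤ w a := fun a =>
      f.toLinearMap.nonneg_of_lt_on_Ici hfQ fun b => by dsimp only; split_ifs <;> norm_num
    obtain ⟨S, hS, hSw⟩ := h w hw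
    have hall : u' < ∑ a, w a := by simpa [hf] using hfQ 1 Set.self_mem_Ici
    have hSlt : t * ∑ a ∈ S, w a < u := by
      have hxS : ∀ S', x (Pi.single S 1) S' = if S' = S then t else 0 := fun S' => by
        rw [hx, Pi.single_apply]; split_ifs <;> simp_all
      have := hfD _ ⟨Pi.single S 1, single_mem_stdSimplex ℝ S, rfl⟩
      simpa [hf, hcover, hxS, mul_sum] using this
    linarith

end FractionalColouring

theorem stmt_2_general (d : ℕ)
    (h : ∀ (V : Type) [Fintype V] (G : SimpleGraph V), P5Free G →
      Fintype.card V ≤ alphaNum G * omegaNum G ^ d) :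
    ∀ (V : Type) [Fintype V] [DecidableEq V] (G : SimpleGraph V), Nonempty V → P5Free G →
      fracChrom G ≤ (omegaNum G : ℝ) ^ d := by
  intro V _ _ G _ hG
  refine fracChrom_le_of_forall_weight (by positivity) fun w hw => ?_
  refine exists_sum_le_mul_sum_of_nat_weights (by positivity) (fun c => ?_) w hw
  have hblowup := h _ (G.blowup c) (G.tFree_blowup c P5_eq_of_not_adj_of_forall_adj_iff hG)
  obtain ⟨S, hS, hc⟩ := G.exists_isStableSet_sum_le_of_blowup c
    (hblowup.trans (Nat.mul_le_mul_left _ (Nat.pow_le_pow_left (G.omegaNum_blowup_le c) d)))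
  exact ⟨S, hS, by rw [mul_comm]; exact_mod_cast hc⟩

/-- If `d ≥ 2` is such that every `P₅`-free graph `G` satisfies
`α(G)·ω(G)^d ≥ |G|`, then every nonempty `P₅`-free graph `G` satisfies `χ*(G) ≤ ω(G)^d`. -/
theorem stmt_2 (d : ℕ) (hd : 2 ≤ d)
    (h : ∀ (V : Type) [Fintype V] (G : SimpleGraph V), P5Free G →
      Fintype.card V ≤ alphaNum G * omegaNum G ^ d) :
    ∀ (V : Type) [Fintype V] [DecidableEq V] (G : SimpleGraph V), Nonempty V → P5Free G →
      fracChrom G ≤ (omegaNum G : ℝ) ^ d :=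
  stmt_2_general d h
end

section
/- There exists an integer a ≥ 2 such that for every real ε with 0 < ε ≤ 1/2 and every ε^a-sparse P5-free graph G with |G| ≥ ε^{−a}, there is an anticomplete blockade (B_1,…,B_k) in G with k ≥ ε^{−1} and |B_i| ≥ ε^a·|G| for all i ∈ [k]. -/
open SimpleGraph

/-!
In a `P₅`-free graph every vertex set `R` contains either a vertex of degree at least
`|R|/7776 - 1` or an anticomplete pair of sets of size at least `|R|/7776` each. This is
Gyárfás' path argument: grow an induced path, each time stepping from its end into a large
connected piece of the set that avoids the neighbourhood of the end; `P₅`-freeness stops the path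
after four steps, and each step loses a factor of at most `6`.

In an `ε²⁸`-sparse graph the high-degree alternative never occurs in sets of size at least
`ε²⁶|G|`, so splitting `t` times with `2ᵗ ≈ ε⁻¹` yields `2ᵗ` pairwise anticomplete blocks of
size at least `7776⁻ᵗ|G| ≥ ε²⁶|G|`.
-/

namespace SimpleGraph

variable {V : Type*} {G : SimpleGraph V}

def IsClosedIn (G : SimpleGraph V) (S A : Finset V) : Prop :=
  ∀ a ∈ A, ∀ b ∈ S, G.Adj a b → b ∈ A

-- Connectivity of the induced subgraph `G[C]`, expressed by the absence of cuts.
def IsConnectedSet (G : SimpleGraph V) (C : Finset V) : Prop :=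
  ∀ T ⊆ C, T.Nonempty → G.IsClosedIn C T → T = C

theorem IsClosedIn.trans {S A T : Finset V} (hA : G.IsClosedIn S A) (hTA : T ⊆ A)
    (hT : G.IsClosedIn A T) : G.IsClosedIn S T :=
  fun a ha b hb hab => hT a ha b (hA a (hTA ha) b hb hab) hab

theorem IsClosedIn.sdiff [DecidableEq V] {A T : Finset V} (hT : G.IsClosedIn A T) :
    G.IsClosedIn A (A \ T) := by
  intro a ha b hb hab
  rw [Finset.mem_sdiff] at ha ⊢
  exact ⟨hb, fun hbT => ha.2 (hT b hbT a ha.1 hab.symm)⟩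

theorem IsConnectedSet.exists_adj_notMem {C T : Finset V} (hC : G.IsConnectedSet C)
    (hTC : T ⊆ C) (hT : T.Nonempty) (hne : T ≠ C) : ∃ a ∈ T, ∃ b ∈ C, b ∉ T ∧ G.Adj a b := by
  by_contra! h
  exact hne (hC T hTC hT fun a ha b hb hab => by_contra fun hbT => h a ha b hb hbT hab)

theorem IsConnectedSet.insert [DecidableEq V] {C : Finset V} {x y : V} (hC : G.IsConnectedSet C)
    (hy : y ∈ C) (hxy : G.Adj x y) : G.IsConnectedSet (insert x C) := by
  intro T hT hTne hTcl
  have hTC : G.IsClosedIn C (T ∩ C) := fun a ha b hb hab =>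
    Finset.mem_inter.2 ⟨hTcl a (Finset.mem_inter.1 ha).1 b (Finset.mem_insert_of_mem hb) hab, hb⟩
  by_cases hx : x ∈ T
  · have hyT : y ∈ T := hTcl x hx y (Finset.mem_insert_of_mem hy) hxy
    have hCT : T ∩ C = C := hC _ Finset.inter_subset_right ⟨y, Finset.mem_inter.2 ⟨hyT, hy⟩⟩ hTC
    refine hT.antisymm (Finset.insert_subset hx ?_)
    exact hCT ▸ Finset.inter_subset_left
  · have hTsub : T ⊆ C := fun a ha =>
      (Finset.mem_insert.1 (hT ha)).resolve_left fun h => hx (h ▸ ha)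
    have hTeq : T = C := hC T hTsub hTne (by rwa [Finset.inter_eq_left.2 hTsub] at hTC)
    exact absurd (hTcl y (hTeq ▸ hy) x (Finset.mem_insert_self x C) hxy.symm) hx

theorem exists_split_or_isConnectedSet [DecidableEq V] (G : SimpleGraph V) (S : Finset V) :
    (∃ X Y, X ⊆ S ∧ Y ⊆ S ∧ AnticompletePair G X Y ∧ S.card ≤ 3 * X.card ∧
      S.card ≤ 3 * Y.card) ∨
    ∃ C ⊆ S, C.Nonempty ∧ G.IsClosedIn S C ∧ G.IsConnectedSet C ∧ S.card ≤ 3 * C.card := by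
  rcases S.eq_empty_or_nonempty with rfl | hS
  · exact Or.inl ⟨∅, ∅, le_rfl, le_rfl, by simp [AnticompletePair], by simp, by simp⟩
  classical
  obtain ⟨A, hA, hAmin⟩ := Finset.exists_min_image
    (S.powerset.filter fun A => G.IsClosedIn S A ∧ S.card ≤ 3 * A.card) Finset.card
    ⟨S, Finset.mem_filter.2 ⟨Finset.mem_powerset_self S, fun _ _ _ hb _ => hb, by omega⟩⟩
  simp only [Finset.mem_filter, Finset.mem_powerset, and_imp] at hA hAmin
  obtain ⟨hAS, hAcl, hAcard⟩ := hA
  have hAne : A.Nonempty := by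
    rw [Finset.nonempty_iff_ne_empty]
    rintro rfl
    simp only [Finset.card_empty, mul_zero, Nat.le_zero, Finset.card_eq_zero] at hAcard
    exact hS.ne_empty hAcard
  by_cases hAconn : G.IsConnectedSet A
  · exact Or.inr ⟨A, hAS, hAne, hAcl, hAconn, hAcard⟩
  -- A minimal closed set that is not connected splits into two smaller closed sets.
  simp only [IsConnectedSet, not_forall] at hAconn
  obtain ⟨T, hTA, hTne, hTcl, hTA'⟩ := hAconn
  have small : ∀ T ⊆ A, T ≠ A → G.IsClosedIn A T → 3 * T.card < S.card := fun T hTA hne hT =>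
    by_contra fun h => (Finset.card_lt_card (Finset.ssubset_iff_subset_ne.2 ⟨hTA, hne⟩)).not_ge
      (hAmin T (hTA.trans hAS) (hAcl.trans hTA hT) (by omega))
  have hT := small T hTA hTA' hTcl
  have hAT := small (A \ T) Finset.sdiff_subset
    (fun h => hTne.elim fun t ht =>
      Finset.disjoint_left.1 (Finset.sdiff_eq_self_iff_disjoint.1 h) (hTA ht) ht) hTcl.sdiff
  have hsplit := Finset.card_sdiff_add_card_eq_card hTA
  have hcompl := Finset.card_sdiff_of_subset hAS
  refine Or.inl ⟨A, S \ A, hAS, Finset.sdiff_subset, ⟨Finset.disjoint_sdiff, ?_⟩, hAcard, by omega⟩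
  intro a ha b hb hab
  exact (Finset.mem_sdiff.1 hb).2 (hAcl a ha b (Finset.mem_sdiff.1 hb).1 hab)

def HubOrSplit (G : SimpleGraph V) (c : ℕ) (S : Finset V) : Prop :=
  (∃ v, S.card ≤ c * ((G.neighborSet v).ncard + 1)) ∨
  ∃ X Y, X ⊆ S ∧ Y ⊆ S ∧ AnticompletePair G X Y ∧ S.card ≤ c * X.card ∧ S.card ≤ c * Y.card

theorem HubOrSplit.mono {c c' : ℕ} {S : Finset V} (hcc' : c ≤ c') (h : G.HubOrSplit c S) :
    G.HubOrSplit c' S := by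
  rcases h with ⟨v, hv⟩ | ⟨X, Y, hX, hY, hXY, hXc, hYc⟩
  · exact Or.inl ⟨v, hv.trans (Nat.mul_le_mul_right _ hcc')⟩
  · exact Or.inr ⟨X, Y, hX, hY, hXY, hXc.trans (Nat.mul_le_mul_right _ hcc'),
      hYc.trans (Nat.mul_le_mul_right _ hcc')⟩

theorem HubOrSplit.of_subset {b c : ℕ} {S T : Finset V} (hST : S ⊆ T)
    (hT : T.card ≤ b * S.card) (h : G.HubOrSplit c S) : G.HubOrSplit (b * c) T := by
  rcases h with ⟨v, hv⟩ | ⟨X, Y, hX, hY, hXY, hXc, hYc⟩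
  · exact Or.inl ⟨v, hT.trans (by rw [mul_assoc]; exact Nat.mul_le_mul_left b hv)⟩
  · refine Or.inr ⟨X, Y, hX.trans hST, hY.trans hST, hXY, ?_, ?_⟩
    · exact hT.trans (by rw [mul_assoc]; exact Nat.mul_le_mul_left b hXc)
    · exact hT.trans (by rw [mul_assoc]; exact Nat.mul_le_mul_left b hYc)

theorem card_filter_adj_le_ncard [Finite V] (C : Finset V) (v : V) [DecidablePred (G.Adj v)] :
    (C.filter (G.Adj v)).card ≤ (G.neighborSet v).ncard := by
  rw [← Set.ncard_coe_finset]
  exact Set.ncard_le_ncard fun x hx => (Finset.mem_filter.1 hx).2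

theorem hubOrSplit_or_exists_extension [Finite V] [DecidableEq V] {v : V} {C : Finset V}
    (hv : v ∉ C) (hconn : G.IsConnectedSet (insert v C)) :
    G.HubOrSplit 6 C ∨ ∃ b ∈ C, G.Adj v b ∧ ∃ C' ⊆ C, b ∉ C' ∧ (∀ x ∈ C', ¬ G.Adj v x) ∧
      G.IsConnectedSet (insert b C') ∧ C.card ≤ 6 * C'.card := by
  classical
  set D := C.filter fun x => ¬ G.Adj v x
  have hDC : D ⊆ C := Finset.filter_subset _ _
  have hCD : C.card ≤ D.card + (G.neighborSet v).ncard := by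
    rw [← Finset.card_filter_add_card_filter_not (G.Adj v), add_comm]
    exact Nat.add_le_add_left (card_filter_adj_le_ncard C v) _
  by_cases hDsmall : 2 * D.card < C.card
  · exact Or.inl (Or.inl ⟨v, by omega⟩)
  rcases G.exists_split_or_isConnectedSet D with
    ⟨X, Y, hX, hY, hXY, hXc, hYc⟩ | ⟨C', hC'D, ⟨a₀, ha₀⟩, hC'cl, hC'conn, hC'card⟩
  · exact Or.inl (Or.inr ⟨X, Y, hX.trans hDC, hY.trans hDC, hXY, by omega, by omega⟩)
  have hnv : ∀ x ∈ C', ¬ G.Adj v x := fun x hx => (Finset.mem_filter.1 (hC'D hx)).2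
  have hC'v : C' ⊆ insert v C := (hC'D.trans hDC).trans (Finset.subset_insert v C)
  have hC'ne : C' ≠ insert v C := fun h => hv (hC'D.trans hDC (h ▸ Finset.mem_insert_self v C))
  obtain ⟨a, ha, b, hb, hbC', hab⟩ := hconn.exists_adj_notMem hC'v ⟨a₀, ha₀⟩ hC'ne
  have hbv : b ≠ v := by
    rintro rfl
    exact hnv a ha hab.symm
  have hbC : b ∈ C := (Finset.mem_insert.1 hb).resolve_left hbv
  have hvb : G.Adj v b := by_contra fun h => hbC' (hC'cl a ha b (Finset.mem_filter.2 ⟨hbC, h⟩) hab)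
  exact Or.inr ⟨b, hbC, hvb, C', hC'D.trans hDC, hbC', hnv, hC'conn.insert ha hab.symm, by omega⟩

def IsInducedPath (G : SimpleGraph V) (p : ℕ → V) (n : ℕ) : Prop :=
  ∀ j k, j < k → k < n → (G.Adj (p j) (p k) ↔ j + 1 = k) ∧ p j ≠ p k

theorem IsInducedPath.nonempty_embedding {p : ℕ → V} {n : ℕ} (hp : G.IsInducedPath p n) :
    Nonempty (pathGraph n ↪g G) := by
  have adj_iff : ∀ a b : Fin n, G.Adj (p a) (p b) ↔ (pathGraph n).Adj a b := by
    intro a b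
    rw [pathGraph_adj]
    rcases lt_trichotomy a.val b.val with hab | hab | hab
    · rw [(hp _ _ hab b.isLt).1]
      omega
    · rw [hab]
      simp
    · rw [G.adj_comm, (hp _ _ hab a.isLt).1]
      omega
  have inj : Function.Injective fun a : Fin n => p a := by
    intro a b hab
    by_contra hne
    rcases lt_or_gt_of_ne (Fin.val_ne_of_ne hne) with h | h
    · exact (hp _ _ h b.isLt).2 hab
    · exact (hp _ _ h a.isLt).2 hab.symm
  exact ⟨⟨⟨fun a => p a, inj⟩, adj_iff _ _⟩⟩

theorem IsInducedPath.update {p : ℕ → V} {i : ℕ} {x : V} (hp : G.IsInducedPath p (i + 1))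
    (hx : G.Adj (p i) x) (hnadj : ∀ j < i, ¬ G.Adj (p j) x) (hne : ∀ j ≤ i, p j ≠ x) :
    G.IsInducedPath (Function.update p (i + 1) x) (i + 2) := by
  intro j k hjk hk
  rw [Function.update_of_ne (by omega)]
  by_cases hki : k = i + 1
  · subst hki
    rw [Function.update_self]
    refine ⟨?_, hne j (by omega)⟩
    rcases Nat.lt_or_ge j i with hj | hj
    · exact iff_of_false (hnadj j hj) (by omega)
    · obtain rfl : j = i := by omega
      exact iff_of_true hx rfl
  · rw [Function.update_of_ne hki]
    exact hp j k hjk (by omega)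

theorem hubOrSplit_of_isInducedPath [Finite V] [DecidableEq V] (m : ℕ) :
    ∀ (i : ℕ) (p : ℕ → V) (C : Finset V), IsEmpty (pathGraph (i + 1 + m) ↪g G) →
      G.IsInducedPath p (i + 1) → (∀ j ≤ i, p j ∉ C) → (∀ j < i, ∀ x ∈ C, ¬ G.Adj (p j) x) →
      G.IsConnectedSet (insert (p i) C) → G.HubOrSplit (6 ^ m) C := by
  induction m with
  | zero =>
    intro i p C hfree hp _ _ _
    exact (hfree.false hp.nonempty_embedding.some).elim
  | succ m ih =>
    intro i p C hfree hp hpC hadj hconn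
    rcases hubOrSplit_or_exists_extension (hpC i le_rfl) hconn with
      h | ⟨b, hbC, hvb, C', hC'C, hbC', hnv, hconn', hcard⟩
    · exact h.mono (Nat.le_self_pow (Nat.succ_ne_zero m) 6)
    have hp' : ∀ j ≤ i, Function.update p (i + 1) b j = p j :=
      fun j hj => Function.update_of_ne (by omega) _ _
    have hC' := ih (i + 1) (Function.update p (i + 1) b) C'
      (by rwa [show i + 1 + 1 + m = i + 1 + (m + 1) by omega])
      (hp.update hvb (fun j hj => hadj j hj b hbC) (fun j hj h => hpC j hj (h ▸ hbC)))
      (by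
        intro j hj
        rcases Nat.lt_or_ge j (i + 1) with hji | hji
        · rw [hp' j (by omega)]
          exact fun h => hpC j (by omega) (hC'C h)
        · rwa [show j = i + 1 by omega, Function.update_self])
      (by
        intro j hj x hx
        rw [hp' j (by omega)]
        rcases Nat.lt_or_ge j i with hji | hji
        · exact hadj j hji x (hC'C hx)
        · exact (show j = i by omega) ▸ hnv x hx)
      (by rwa [Function.update_self])
    rw [pow_succ']
    exact hC'.of_subset hC'C hcard

theorem hubOrSplit_of_isEmpty_pathGraph_embedding [Finite V] (k : ℕ)
    (hG : IsEmpty (pathGraph (k + 1) ↪g G)) (R : Finset V) : G.HubOrSplit (6 ^ (k + 1)) R := by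
  classical
  have h3 : 3 ≤ 6 ^ (k + 1) := le_trans (by norm_num) (Nat.le_self_pow (Nat.succ_ne_zero k) 6)
  rcases G.exists_split_or_isConnectedSet R with
    ⟨X, Y, hX, hY, hXY, hXc, hYc⟩ | ⟨C₀, hC₀R, ⟨w, hw⟩, -, hconn, hcard⟩
  · exact HubOrSplit.mono h3 (Or.inr ⟨X, Y, hX, hY, hXY, hXc, hYc⟩)
  have hC := hubOrSplit_of_isInducedPath k 0 (fun _ => w) (C₀.erase w)
    (by rwa [Nat.zero_add, Nat.add_comm]) (fun j k _ hk => by omega)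
    (fun _ _ => Finset.notMem_erase w C₀) (fun j hj => absurd hj (Nat.not_lt_zero j))
    (by rwa [Finset.insert_erase hw])
  have herase := Finset.card_erase_of_mem hw
  have hC₀pos := Finset.card_pos.2 ⟨w, hw⟩
  rcases (C₀.erase w).eq_empty_or_nonempty with hempty | hne
  · refine Or.inl ⟨w, le_trans ?_ (Nat.le_mul_of_pos_right _ (Nat.succ_pos _))⟩
    rw [hempty, Finset.card_empty] at herase
    omega
  · have := hC.of_subset (b := 6) ((Finset.erase_subset w C₀).trans hC₀R)
      (by have := hne.card_pos; omega)
    rwa [← pow_succ'] at this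

end SimpleGraph

theorem P5_eq_pathGraph : P5 = SimpleGraph.pathGraph 5 := by
  ext a b
  rw [SimpleGraph.pathGraph_adj, P5, SimpleGraph.fromRel_adj]
  exact ⟨fun h => h.2, fun h => ⟨fun hab => by subst hab; omega, h⟩⟩

section Blockade

variable {V : Type*} {G : SimpleGraph V}

theorem AnticompletePair.symm {X Y : Finset V} (h : AnticompletePair G X Y) :
    AnticompletePair G Y X :=
  ⟨h.1.symm, fun a ha b hb hab => h.2 b hb a ha hab.symm⟩

theorem AnticompletePair.mono {X Y X' Y' : Finset V} (h : AnticompletePair G X Y) (hX : X' ⊆ X)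
    (hY : Y' ⊆ Y) : AnticompletePair G X' Y' :=
  ⟨h.1.mono hX hY, fun a ha b hb => h.2 a (hX ha) b (hY hb)⟩

theorem anticompleteBlockade_iff {k : ℕ} {B : Fin k → Finset V} :
    AnticompleteBlockade G B ↔ ∀ i j, i ≠ j → AnticompletePair G (B i) (B j) :=
  ⟨fun h i j hij => ⟨h.1 i j hij, h.2 i j hij⟩,
    fun h => ⟨fun i j hij => (h i j hij).1, fun i j hij => (h i j hij).2⟩⟩

theorem AnticompleteBlockade.append {k₁ k₂ : ℕ} {B₁ : Fin k₁ → Finset V} {B₂ : Fin k₂ → Finset V}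
    {X Y : Finset V} (h₁ : AnticompleteBlockade G B₁) (h₂ : AnticompleteBlockade G B₂)
    (hX : ∀ i, B₁ i ⊆ X) (hY : ∀ i, B₂ i ⊆ Y) (hXY : AnticompletePair G X Y) :
    AnticompleteBlockade G (Fin.append B₁ B₂) := by
  rw [anticompleteBlockade_iff] at *
  intro i j hij
  cases i using Fin.addCases <;> cases j using Fin.addCases <;>
    simp only [Fin.append_left, Fin.append_right]
  · exact h₁ _ _ fun h => hij (h ▸ rfl)
  · exact hXY.mono (hX _) (hY _)
  · exact hXY.symm.mono (hY _) (hX _)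
  · exact h₂ _ _ fun h => hij (h ▸ rfl)

theorem exists_anticompleteBlockade_of_hubOrSplit {c : ℕ} (hc : ∀ R, G.HubOrSplit c R)
    (t : ℕ) : ∀ R : Finset V, (∀ v, c ^ t * ((G.neighborSet v).ncard + 1) < R.card) →
      ∃ k, 2 ^ t ≤ k ∧ ∃ B : Fin k → Finset V, (∀ i, B i ⊆ R) ∧ AnticompleteBlockade G B ∧
        ∀ i, R.card ≤ c ^ t * (B i).card := by
  induction t with
  | zero =>
    intro R _
    refine ⟨1, le_rfl, fun _ => R, fun _ => le_rfl, ?_, fun _ => by simp⟩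
    exact anticompleteBlockade_iff.2 fun i j hij => absurd (Subsingleton.elim i j) hij
  | succ t ih =>
    intro R hR
    rcases hc R with ⟨v, hv⟩ | ⟨X, Y, hX, hY, hXY, hXc, hYc⟩
    · exact absurd ((hR v).trans_le hv) <|
        not_lt.2 (Nat.mul_le_mul_right _ (Nat.le_self_pow (Nat.succ_ne_zero t) c))
    have child : ∀ Z : Finset V, R.card ≤ c * Z.card →
        ∀ v, c ^ t * ((G.neighborSet v).ncard + 1) < Z.card := fun Z hZ v =>
      Nat.lt_of_mul_lt_mul_left ((mul_assoc c _ _ ▸ pow_succ' c t ▸ hR v).trans_le hZ)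
    obtain ⟨k₁, hk₁, B₁, hB₁X, hB₁, hB₁c⟩ := ih X (child X hXc)
    obtain ⟨k₂, hk₂, B₂, hB₂Y, hB₂, hB₂c⟩ := ih Y (child Y hYc)
    refine ⟨k₁ + k₂, by rw [pow_succ]; omega, Fin.append B₁ B₂, ?_,
      hB₁.append hB₂ hB₁X hB₂Y hXY, ?_⟩ <;> intro i <;> cases i using Fin.addCases <;>
      simp only [Fin.append_left, Fin.append_right]
    · exact (hB₁X _).trans hX
    · exact (hB₂Y _).trans hY
    · exact hXc.trans (pow_succ' c t ▸ mul_assoc c _ _ ▸ Nat.mul_le_mul_left c (hB₁c _))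
    · exact hYc.trans (pow_succ' c t ▸ mul_assoc c _ _ ▸ Nat.mul_le_mul_left c (hB₂c _))

end Blockade

theorem exists_anticompleteBlockade_of_p5Free {V : Type*} [Fintype V] {G : SimpleGraph V}
    (hG : P5Free G) (t : ℕ)
    (hdeg : ∀ v, 7776 ^ t * ((G.neighborSet v).ncard + 1) < Fintype.card V) :
    ∃ k, 2 ^ t ≤ k ∧ ∃ B : Fin k → Finset V, AnticompleteBlockade G B ∧
      ∀ i, Fintype.card V ≤ 7776 ^ t * (B i).card := by
  have hpath : IsEmpty (SimpleGraph.pathGraph (4 + 1) ↪g G) := P5_eq_pathGraph ▸ hG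
  obtain ⟨k, hk, B, -, hB, hBc⟩ := exists_anticompleteBlockade_of_hubOrSplit
    (G.hubOrSplit_of_isEmpty_pathGraph_embedding 4 hpath) t Finset.univ hdeg
  exact ⟨k, hk, B, hB, hBc⟩

theorem exists_inv_le_two_pow_and_pow_mul_le_one {ε : ℝ} (hε : 0 < ε) (hε2 : ε ≤ 1 / 2) :
    ∃ t : ℕ, ε⁻¹ ≤ 2 ^ t ∧ (7776 : ℝ) ^ t * ε ^ 26 ≤ 1 := by
  have hinv : 2 ≤ ε⁻¹ := by rw [le_inv_comm₀ two_pos hε]; linarith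
  obtain ⟨n, hn, hn'⟩ := exists_nat_pow_near (by linarith : (1 : ℝ) ≤ ε⁻¹) one_lt_two
  refine ⟨n + 1, hn'.le, ?_⟩
  have hbase : (2 : ℝ) ^ (n + 1) * ε ^ 2 ≤ 1 := calc
    (2 : ℝ) ^ (n + 1) * ε ^ 2 = 2 * ε * (2 ^ n * ε) := by ring
    _ ≤ 1 * (ε⁻¹ * ε) := by gcongr; linarith
    _ = 1 := by rw [inv_mul_cancel₀ hε.ne', one_mul]
  calc (7776 : ℝ) ^ (n + 1) * ε ^ 26 ≤ (2 ^ 13) ^ (n + 1) * ε ^ 26 := by gcongr; norm_num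
    _ = (2 ^ (n + 1) * ε ^ 2) ^ 13 := by rw [mul_pow, ← pow_mul, ← pow_mul, ← pow_mul]; ring
    _ ≤ 1 := pow_le_one₀ (by positivity) hbase

/-- There exists `a ≥ 2` such that for every `ε ∈ (0, 1/2]` and every
`εᵃ`-sparse `P₅`-free graph `G` with `|G| ≥ ε⁻ᵃ`, there is an anticomplete blockade
`(B₁,…,B_k)` in `G` with `k ≥ ε⁻¹` and `|Bᵢ| ≥ εᵃ|G|` for all `i`. -/
theorem stmt_6 : ∃ a : ℕ, 2 ≤ a ∧
    ∀ ε : ℝ, 0 < ε → ε ≤ 1/2 →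
    ∀ (V : Type) [Fintype V] (G : SimpleGraph V), P5Free G → EpsSparse (ε ^ a) G →
      (ε ^ a)⁻¹ ≤ (Fintype.card V : ℝ) →
      ∃ (k : ℕ) (B : Fin k → Finset V), ε⁻¹ ≤ (k : ℝ) ∧ AnticompleteBlockade G B ∧
        ∀ i, ε ^ a * (Fintype.card V : ℝ) ≤ (B i).card := by
  refine ⟨28, by norm_num, fun ε hε hε2 V _ G hG hsparse hcard => ?_⟩
  obtain ⟨t, hεt, hct⟩ := exists_inv_le_two_pow_and_pow_mul_le_one hε hε2
  have hn : 1 ≤ ε ^ 28 * Fintype.card V := by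
    rwa [inv_le_iff_one_le_mul₀' (by positivity)] at hcard
  have hnpos : (0 : ℝ) < Fintype.card V :=
    pos_of_mul_pos_right (a := ε ^ 28) (by linarith) (by positivity)
  have hdeg : ∀ v, 7776 ^ t * ((G.neighborSet v).ncard + 1) < Fintype.card V := by
    intro v
    have hsq : ε ^ 2 ≤ 1 / 4 := by nlinarith
    have : (7776 : ℝ) ^ t * ((G.neighborSet v).ncard + 1) < Fintype.card V := calc
      _ ≤ 7776 ^ t * (2 * (ε ^ 28 * Fintype.card V)) := by gcongr; linarith [hsparse v]
      _ = 2 * ε ^ 2 * ((7776 ^ t * ε ^ 26) * Fintype.card V) := by ring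
      _ ≤ 2 * (1 / 4) * (1 * Fintype.card V) := by gcongr
      _ < Fintype.card V := by linarith
    exact_mod_cast this
  obtain ⟨k, hk, B, hB, hBc⟩ := exists_anticompleteBlockade_of_p5Free hG t hdeg
  refine ⟨k, B, hεt.trans (by exact_mod_cast hk), hB, fun i => ?_⟩
  have hi : (Fintype.card V : ℝ) ≤ 7776 ^ t * (B i).card := by exact_mod_cast hBc i
  calc ε ^ 28 * Fintype.card V ≤ ε ^ 26 * Fintype.card V :=
        mul_le_mul_of_nonneg_right (pow_le_pow_of_le_one hε.le (by linarith) (by norm_num)) hnpos.le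
    _ ≤ ε ^ 26 * (7776 ^ t * (B i).card) := by gcongr
    _ = (7776 ^ t * ε ^ 26) * (B i).card := by ring
    _ ≤ (B i).card := mul_le_of_le_one_left (by positivity) hct
end

section
/- Let G be a graph with nonempty disjoint vertex subsets A and B such that each vertex in A has at most Δ neighbours in B (where Δ > 0) and every vertex in B has a neighbour in A. Then for every real Γ > 0, either |B| < 20·√(Γ·Δ), or for some integer k ≥ 1 there are k vertices a_1,…,a_k in A and k pairwise disjoint subsets B_1,…,B_k of B such that for every i ∈ [k], |B_i| ≥ Γ/k², and a_i is adjacent in G to every vertex in B_i and to no vertex in B_j for all j ∈ [k] with j ≠ i. -/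
open SimpleGraph

/-! Choose `S ⊆ A` maximising `|N(S)| - (Δ/4)|S|`, where `N(S)` is the set of vertices of `B`
with a neighbour in `S`. By maximality every `a ∈ S` has at least `Δ/4` private neighbours
(neighbours in `B` adjacent to no other vertex of `S`), and every `a ∈ A` has at most `Δ/4`
neighbours in `B \ N(S)`. If `Γ ≤ |S|²Δ/4`, the vertices of `S` with their private
neighbourhoods form the required comb with `k = |S|`. Otherwise `|N(S)| ≤ |S|Δ < 2√(ΓΔ)`, so
`B \ N(S)` still has at least `18√(ΓΔ) ≥ 20√(ΓΔ/4)` vertices, into which every vertex of `A` has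
at most `Δ/4` neighbours, and we recurse with `Δ/4`. Once `Δ < 1` no vertex of `B` can have a
neighbour in `A`, so the recursion stops. -/

open Finset

namespace SimpleGraph

def HasComb {V : Type*} (G : SimpleGraph V) (A B : Finset V) (Γ : ℝ) : Prop :=
  ∃ (k : ℕ), 1 ≤ k ∧ ∃ (a : Fin k → V) (Bs : Fin k → Finset V),
    Function.Injective a ∧ (∀ i, a i ∈ A) ∧ (∀ i, Bs i ⊆ B) ∧
    (∀ i j, i ≠ j → Disjoint (Bs i) (Bs j)) ∧
    (∀ i, Γ / (k : ℝ) ^ 2 ≤ ((Bs i).card : ℝ)) ∧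
    (∀ i, ∀ b ∈ Bs i, G.Adj (a i) b) ∧
    (∀ i j, j ≠ i → ∀ b ∈ Bs j, ¬ G.Adj (a i) b)

theorem HasComb.mono {V : Type*} {G : SimpleGraph V} {A B B' : Finset V} {Γ : ℝ}
    (h : G.HasComb A B Γ) (hB : B ⊆ B') : G.HasComb A B' Γ := by
  obtain ⟨k, hk, a, Bs, ha, hA, hBs, rest⟩ := h
  exact ⟨k, hk, a, Bs, ha, hA, fun i => (hBs i).trans hB, rest⟩

variable {V : Type*} [DecidableEq V] (G : SimpleGraph V) [DecidableRel G.Adj]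

def nbhdIn (B S : Finset V) : Finset V := B.filter fun b => ∃ a ∈ S, G.Adj a b

def privateNbhd (B S : Finset V) (a : V) : Finset V :=
  (B \ G.nbhdIn B (S.erase a)).filter (G.Adj a)

variable {G}

theorem not_adj_of_mem_privateNbhd {B S : Finset V} {a a' b : V} (ha' : a' ∈ S) (hne : a' ≠ a)
    (hb : b ∈ G.privateNbhd B S a) : ¬ G.Adj a' b := by
  intro hadj
  simp only [privateNbhd, nbhdIn, mem_filter, mem_sdiff] at hb
  exact hb.1.2 ⟨hb.1.1, a', mem_erase.2 ⟨hne, ha'⟩, hadj⟩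

theorem hasComb_of_le_card_privateNbhd {A B S : Finset V} {Γ : ℝ} (hSA : S ⊆ A)
    (hS : S.Nonempty) (hP : ∀ a ∈ S, Γ / (S.card : ℝ) ^ 2 ≤ (G.privateNbhd B S a).card) :
    G.HasComb A B Γ := by
  set e := S.equivFin.symm
  have he : ∀ {i j}, i ≠ j → (e i : V) ≠ e j := fun hij h =>
    hij (e.injective (Subtype.val_injective h))
  refine ⟨S.card, hS.card_pos, fun i => e i, fun i => G.privateNbhd B S (e i),
    Subtype.val_injective.comp e.injective, fun i => hSA (e i).2,
    fun i => (filter_subset _ _).trans sdiff_subset, fun i j hij => ?_, fun i => hP _ (e i).2,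
    fun i b hb => (mem_filter.1 hb).2,
    fun i j hji b hb => not_adj_of_mem_privateNbhd (e i).2 (he hji.symm) hb⟩
  exact Finset.disjoint_left.2 fun b hbi hbj =>
    not_adj_of_mem_privateNbhd (e i).2 (he hij) hbj (mem_filter.1 hbi).2

variable (G)

theorem card_nbhdIn_insert (B S : Finset V) (a : V) :
    (G.nbhdIn B (insert a S)).card =
      (G.nbhdIn B S).card + ((B \ G.nbhdIn B S).filter (G.Adj a)).card := by
  rw [← card_union_of_disjoint (disjoint_sdiff.mono_right (filter_subset _ _))]
  congr 1
  ext b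
  simp only [nbhdIn, mem_filter, mem_insert, mem_union, mem_sdiff]
  grind

theorem card_nbhdIn_le {B S : Finset V} {Δ : ℝ}
    (hdeg : ∀ a ∈ S, ((B.filter (G.Adj a)).card : ℝ) ≤ Δ) :
    ((G.nbhdIn B S).card : ℝ) ≤ S.card * Δ := by
  have hN : G.nbhdIn B S = S.biUnion fun a => B.filter (G.Adj a) := by
    ext b
    simp only [nbhdIn, mem_filter, mem_biUnion]
    grind
  calc ((G.nbhdIn B S).card : ℝ) ≤ ∑ a ∈ S, ((B.filter (G.Adj a)).card : ℝ) := by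
        rw [hN]; exact_mod_cast card_biUnion_le
    _ ≤ S.card * Δ := by simpa using sum_le_card_nsmul S _ Δ hdeg

theorem exists_subset_le_card_privateNbhd (A B : Finset V) {c : ℝ} (hc : 0 ≤ c) :
    ∃ S ⊆ A, (∀ a ∈ S, c ≤ (G.privateNbhd B S a).card) ∧
      ∀ a ∈ A, (((B \ G.nbhdIn B S).filter (G.Adj a)).card : ℝ) ≤ c := by
  obtain ⟨S, hSA, hmax⟩ := exists_max_image A.powerset
    (fun S => ((G.nbhdIn B S).card : ℝ) - c * S.card) ⟨∅, empty_mem_powerset A⟩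
  rw [mem_powerset] at hSA
  refine ⟨S, hSA, fun a ha => ?_, fun a ha => ?_⟩
  · have hle := hmax (S.erase a) (mem_powerset.2 ((erase_subset a S).trans hSA))
    have hN := G.card_nbhdIn_insert B (S.erase a) a
    rw [insert_erase ha] at hN
    have hS := card_erase_add_one ha
    rw [hN, ← hS] at hle
    push_cast at hle
    rw [privateNbhd]
    linarith
  · have hle := hmax (insert a S) (mem_powerset.2 (insert_subset ha hSA))
    rw [G.card_nbhdIn_insert] at hle
    have hS : c * (insert a S).card ≤ c * (S.card + 1) :=
      mul_le_mul_of_nonneg_left (by exact_mod_cast card_insert_le a S) hc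
    push_cast at hle
    linarith

theorem hasComb_or_exists_sparse_subset {A B : Finset V} {Δ Γ : ℝ} (hΔ : 0 ≤ Δ) (hΓ : 0 < Γ)
    (hdeg : ∀ a ∈ A, ((B.filter (G.Adj a)).card : ℝ) ≤ Δ) :
    G.HasComb A B Γ ∨ ∃ U ⊆ B, (B.card : ℝ) - 2 * √(Γ * Δ) ≤ U.card ∧
      ∀ a ∈ A, ((U.filter (G.Adj a)).card : ℝ) ≤ Δ / 4 := by
  obtain ⟨S, hSA, hpriv, hrest⟩ :=
    G.exists_subset_le_card_privateNbhd A B (by positivity : 0 ≤ Δ / 4)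
  by_cases hbig : Γ ≤ (S.card : ℝ) ^ 2 * (Δ / 4)
  · have hS : S.Nonempty := by
      rw [nonempty_iff_ne_empty]
      rintro rfl
      simp only [card_empty, Nat.cast_zero] at hbig
      linarith
    have hpos : (0 : ℝ) < (S.card : ℝ) ^ 2 := by positivity
    exact Or.inl <| hasComb_of_le_card_privateNbhd hSA hS fun a ha =>
      (div_le_of_le_mul₀ hpos.le (by positivity) (by linarith)).trans (hpriv a ha)
  · refine Or.inr ⟨B \ G.nbhdIn B S, sdiff_subset, ?_, hrest⟩
    have hN := G.card_nbhdIn_le fun a ha => hdeg a (hSA ha)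
    have hSΔ : S.card * Δ / 2 ≤ √(Γ * Δ) := by
      rw [Real.le_sqrt (by positivity) (by positivity)]
      nlinarith [mul_le_mul_of_nonneg_right (not_le.1 hbig).le hΔ]
    have hcard : ((B \ G.nbhdIn B S).card : ℝ) + (G.nbhdIn B S).card = B.card := by
      exact_mod_cast card_sdiff_add_card_eq_card (filter_subset _ B)
    linarith

theorem hasComb_of_lt_pow {A : Finset V} {Γ : ℝ} (hΓ : 0 < Γ) (N : ℕ) :
    ∀ {B : Finset V} {Δ : ℝ}, 0 < Δ → Δ < 4 ^ N →
      (∀ a ∈ A, ((B.filter (G.Adj a)).card : ℝ) ≤ Δ) → (∀ b ∈ B, ∃ a ∈ A, G.Adj a b) →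
      20 * √(Γ * Δ) ≤ B.card → G.HasComb A B Γ := by
  induction N with
  | zero =>
    intro B Δ hΔ hΔN hdeg hnbr hB
    obtain ⟨b, hb⟩ : B.Nonempty := by
      rw [← card_pos, ← Nat.cast_pos (α := ℝ)]
      exact lt_of_lt_of_le (by positivity) hB
    obtain ⟨a, ha, hab⟩ := hnbr b hb
    have hone : (1 : ℝ) ≤ (B.filter (G.Adj a)).card := by
      exact_mod_cast card_pos.2 ⟨b, mem_filter.2 ⟨hb, hab⟩⟩
    rw [pow_zero] at hΔN
    linarith [hdeg a ha]
  | succ N ih =>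
    intro B Δ hΔ hΔN hdeg hnbr hB
    obtain hcomb | ⟨U, hUB, hU, hdegU⟩ := G.hasComb_or_exists_sparse_subset hΔ.le hΓ hdeg
    · exact hcomb
    · have hsqrt : √(Γ * (Δ / 4)) = √(Γ * Δ) / 2 := by
        rw [← mul_div_assoc, Real.sqrt_div' _ (by norm_num),
          show (4 : ℝ) = 2 ^ 2 by norm_num, Real.sqrt_sq (by norm_num)]
      refine (ih (by positivity) (by rw [pow_succ] at hΔN; linarith) hdegU
        (fun b hb => hnbr b (hUB hb)) ?_).mono hUB
      rw [hsqrt]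
      linarith [Real.sqrt_nonneg (Γ * Δ)]

end SimpleGraph

theorem stmt_17_general (V : Type) (G : SimpleGraph V) (A B : Finset V)
    (Δ : ℝ) (hΔ : 0 < Δ)
    (hdeg : ∀ a ∈ A, (({b | b ∈ B ∧ G.Adj a b} : Set V).ncard : ℝ) ≤ Δ)
    (hnbr : ∀ b ∈ B, ∃ a ∈ A, G.Adj a b)
    (Γ : ℝ) (hΓ : 0 < Γ) :
    ((B.card : ℝ) < 20 * Real.sqrt (Γ * Δ)) ∨
    (∃ (k : ℕ), 1 ≤ k ∧ ∃ (a : Fin k → V) (Bs : Fin k → Finset V),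
      Function.Injective a ∧ (∀ i, a i ∈ A) ∧ (∀ i, Bs i ⊆ B) ∧
      (∀ i j, i ≠ j → Disjoint (Bs i) (Bs j)) ∧
      (∀ i, Γ / (k : ℝ) ^ 2 ≤ ((Bs i).card : ℝ)) ∧
      (∀ i, ∀ b ∈ Bs i, G.Adj (a i) b) ∧
      (∀ i j, j ≠ i → ∀ b ∈ Bs j, ¬ G.Adj (a i) b)) := by
  classical
  refine or_iff_not_imp_left.2 fun hB => ?_
  obtain ⟨N, hN⟩ := pow_unbounded_of_one_lt Δ (by norm_num : (1 : ℝ) < 4)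
  have hdeg' : ∀ a ∈ A, ((B.filter (G.Adj a)).card : ℝ) ≤ Δ := fun a ha => by
    rw [← Set.ncard_coe_finset, coe_filter]
    exact hdeg a ha
  exact G.hasComb_of_lt_pow hΓ N hΔ hN hdeg' hnbr (not_lt.1 hB)

/-- the "comb" lemma: Let `G` be a graph with nonempty disjoint vertex
subsets `A, B` such that each vertex of `A` has at most `Δ > 0` neighbours in `B` and
every vertex of `B` has a neighbour in `A`. Then for every `Γ > 0`, either
`|B| < 20√(ΓΔ)`, or for some `k ≥ 1` there are `k` vertices `a₁,…,a_k ∈ A` and `k`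
pairwise disjoint subsets `B₁,…,B_k ⊆ B` such that for every `i`, `|Bᵢ| ≥ Γ/k²`, and
`aᵢ` is adjacent to every vertex of `Bᵢ` and to no vertex of `Bⱼ` for `j ≠ i`. -/
theorem stmt_17 (V : Type) [Fintype V] (G : SimpleGraph V) (A B : Finset V)
    (hA : A.Nonempty) (hB : B.Nonempty) (hdisj : Disjoint A B)
    (Δ : ℝ) (hΔ : 0 < Δ)
    (hdeg : ∀ a ∈ A, (({b | b ∈ B ∧ G.Adj a b} : Set V).ncard : ℝ) ≤ Δ)
    (hnbr : ∀ b ∈ B, ∃ a ∈ A, G.Adj a b)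
    (Γ : ℝ) (hΓ : 0 < Γ) :
    ((B.card : ℝ) < 20 * Real.sqrt (Γ * Δ)) ∨
    (∃ (k : ℕ), 1 ≤ k ∧ ∃ (a : Fin k → V) (Bs : Fin k → Finset V),
      Function.Injective a ∧ (∀ i, a i ∈ A) ∧ (∀ i, Bs i ⊆ B) ∧
      (∀ i j, i ≠ j → Disjoint (Bs i) (Bs j)) ∧
      (∀ i, Γ / (k : ℝ) ^ 2 ≤ ((Bs i).card : ℝ)) ∧
      (∀ i, ∀ b ∈ Bs i, G.Adj (a i) b) ∧
      (∀ i j, j ≠ i → ∀ b ∈ Bs j, ¬ G.Adj (a i) b)) :=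
  stmt_17_general V G A B Δ hΔ hdeg hnbr Γ hΓ
end

section
/- There exists a real η with 0 < η ≤ 1/4 such that every η-sparse P5-free graph F with |F| ≥ 2 contains an anticomplete pair (A,B) with |A| ≥ η·|F| and |B| ≥ η·|F|. -/
open SimpleGraph

namespace Stmt18Aux

open Finset

variable {V : Type} {G : SimpleGraph V}

/-- No induced P5: given a path a-b-c-d-e with all required non-adjacencies and
distinctness, contradiction with `P5Free`. -/
lemma noP5 (h : P5Free G) {a b c d e : V}
    (hab : G.Adj a b) (hbc : G.Adj b c) (hcd : G.Adj c d) (hde : G.Adj d e)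
    (hac : ¬ G.Adj a c) (had : ¬ G.Adj a d) (hae : ¬ G.Adj a e)
    (hbd : ¬ G.Adj b d) (hbe : ¬ G.Adj b e) (hce : ¬ G.Adj c e)
    (nac : a ≠ c) (nad : a ≠ d) (nae : a ≠ e) (nbd : b ≠ d) (nbe : b ≠ e)
    (nce : c ≠ e) : False := by
  have nab := hab.ne
  have nbc := hbc.ne
  have ncd := hcd.ne
  have nde := hde.ne
  refine h.false ⟨⟨![a,b,c,d,e], ?_⟩, ?_⟩
  · intro i j hij
    fin_cases i <;> fin_cases j <;> simp_all <;> tauto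
  · intro i j
    have hsymm : ∀ x y : V, G.Adj x y ↔ G.Adj y x := fun x y => G.adj_comm x y
    fin_cases i <;> fin_cases j <;>
      simp [P5, SimpleGraph.fromRel_adj, Fin.ext_iff] <;>
      first
        | exact fun h' => (G.irrefl h').elim
        | tauto

end Stmt18Aux

namespace Stmt18Aux2
open Finset
open scoped Classical
variable {V : Type} [Fintype V] {G : SimpleGraph V}

/-- neighbors as a Finset, using classical decidability -/
noncomputable def nbr (G : SimpleGraph V) (v : V) : Finset V :=
  Finset.univ.filter (fun u => G.Adj v u)

lemma mem_nbr {v u : V} : u ∈ nbr G v ↔ G.Adj v u := by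
  simp [nbr]

/-- reachability within a finset -/
def RWrel (G : SimpleGraph V) (S : Finset V) (a b : V) : Prop :=
  Relation.ReflTransGen (fun u w => G.Adj u w ∧ u ∈ S ∧ w ∈ S) a b

/-- connected closure of `a` within `S` -/
noncomputable def cl (G : SimpleGraph V) (S : Finset V) (a : V) : Finset V :=
  S.filter (fun b => RWrel G S a b)

lemma mem_cl {S : Finset V} {a b : V} : b ∈ cl G S a ↔ b ∈ S ∧ RWrel G S a b := by
  simp [cl]

lemma cl_subset {S : Finset V} {a : V} : cl G S a ⊆ S := Finset.filter_subset _ _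

lemma mem_cl_self {S : Finset V} {a : V} (ha : a ∈ S) : a ∈ cl G S a :=
  mem_cl.mpr ⟨ha, Relation.ReflTransGen.refl⟩

lemma rw_symm {S : Finset V} {a b : V} (h : RWrel G S a b) : RWrel G S b a := by
  refine (@Relation.ReflTransGen.stdSymm _ _ ⟨?_⟩).symm _ _ h
  rintro x y ⟨h1, h2, h3⟩
  exact ⟨h1.symm, h3, h2⟩

lemma rw_trans {S : Finset V} {a b c : V} (h : RWrel G S a b) (h' : RWrel G S b c) :
    RWrel G S a c := h.trans h'

lemma rw_mono {S T : Finset V} {a b : V} (hST : S ⊆ T) (h : RWrel G S a b) :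
    RWrel G T a b := by
  refine Relation.ReflTransGen.mono ?_ _ _ h
  rintro x y ⟨h1, h2, h3⟩
  exact ⟨h1, hST h2, hST h3⟩

lemma rw_last_mem {S : Finset V} {a b : V} (h : RWrel G S a b) : b = a ∨ b ∈ S := by
  induction h with
  | refl => exact Or.inl rfl
  | tail _ h2 _ => exact Or.inr h2.2.2

lemma cl_adj_closed {S : Finset V} {a b c : V} (hb : b ∈ cl G S a)
    (hadj : G.Adj b c) (hc : c ∈ S) : c ∈ cl G S a := by
  rw [mem_cl] at hb ⊢
  exact ⟨hc, hb.2.tail ⟨hadj, hb.1, hc⟩⟩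

lemma not_adj_of_cl {S : Finset V} {a q r : V} (hq : q ∈ cl G S a) (hr : r ∈ S)
    (hrn : r ∉ cl G S a) : ¬ G.Adj q r :=
  fun h => hrn (cl_adj_closed hq h hr)

lemma cl_mono {S T : Finset V} {a : V} (hST : S ⊆ T) : cl G S a ⊆ cl G T a := by
  intro d hd
  rw [mem_cl] at hd ⊢
  exact ⟨hST hd.1, rw_mono hST hd.2⟩

/-- walks from inside `D` to outside must cross the boundary -/
lemma exists_exit {S D : Finset V} {b e : V} (h : RWrel G S b e) (hb : b ∈ D)
    (he : e ∉ D) : ∃ p ∈ D, ∃ q ∈ S, G.Adj p q ∧ q ∉ D := by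
  revert he
  induction h with
  | refl => exact fun he => absurd hb he
  | @tail c e' h1 h2 ih =>
    intro he
    by_cases hc : c ∈ D
    · exact ⟨c, hc, e', h2.2.2, h2.1, he⟩
    · exact ih hc

/-- a walk in `D` from `Z := D \ U` to `U` yields a vertex of `Z`,
reachable within `Z`, with a neighbor in `U`. -/
lemma exists_boundary {D U : Finset V} {c e : V} (h : RWrel G D c e)
    (hc : c ∈ D \ U) (he : e ∈ U) :
    ∃ y ∈ D \ U, ∃ x ∈ U, G.Adj x y ∧ RWrel G (D \ U) c y := by
  have key : ∀ m, RWrel G D c m →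
      (RWrel G (D \ U) c m ∨ ∃ y ∈ D \ U, ∃ x ∈ U, G.Adj x y ∧ RWrel G (D \ U) c y) := by
    intro m hm
    induction hm with
    | refl => exact Or.inl Relation.ReflTransGen.refl
    | @tail p q h1 h2 ih =>
      rcases ih with hrw | hdone
      · by_cases hq : q ∈ U
        · rcases rw_last_mem hrw with hpc | hpZ
          · subst hpc
            exact Or.inr ⟨p, hc, q, hq, h2.1.symm, Relation.ReflTransGen.refl⟩
          · exact Or.inr ⟨p, hpZ, q, hq, h2.1.symm, hrw⟩
        · have hqZ : q ∈ D \ U := Finset.mem_sdiff.mpr ⟨h2.2.2, hq⟩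
          rcases rw_last_mem hrw with hpc | hpZ
          · subst hpc
            exact Or.inl (Relation.ReflTransGen.refl.tail ⟨h2.1, hc, hqZ⟩)
          · exact Or.inl (hrw.tail ⟨h2.1, hpZ, hqZ⟩)
      · exact Or.inr hdone
  rcases key e h with hrw | hdone
  · rcases rw_last_mem hrw with hec | heZ
    · exact absurd he (hec ▸ (Finset.mem_sdiff.mp hc).2)
    · exact absurd he (Finset.mem_sdiff.mp heZ).2
  · exact hdone

/-- walks within `S` starting from `b` stay within `cl G S b` -/
lemma rw_cl {S : Finset V} {b d : V} (hb : b ∈ S) (h : RWrel G S b d) :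
    RWrel G (cl G S b) b d := by
  induction h with
  | refl => exact Relation.ReflTransGen.refl
  | @tail p q h1 h2 ih =>
    refine ih.tail ⟨h2.1, ?_, ?_⟩
    · rcases rw_last_mem h1 with hpb | hpS
      · subst hpb; exact mem_cl_self hb
      · exact mem_cl.mpr ⟨hpS, h1⟩
    · exact mem_cl.mpr ⟨h2.2.2, h1.tail h2⟩

end Stmt18Aux2

namespace Stmt18Aux3
open Finset
open scoped Classical
variable {V : Type} [Fintype V] {G : SimpleGraph V}

/-- greedy extraction of an anticomplete chunk of prescribed size -/
lemma extract (s : ℕ) (hs : 1 ≤ s) :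
    ∀ t : ℕ, ∀ W : Finset V,
    (∀ W' ⊆ W, W'.Nonempty → ∃ Q, Q ⊆ W' ∧ Q.Nonempty ∧ Q.card ≤ s ∧
        (∀ q ∈ Q, ∀ r ∈ W', r ∉ Q → ¬ G.Adj q r)) →
    t ≤ W.card →
    ∃ A ⊆ W, t ≤ A.card ∧ A.card ≤ t + s - 1 ∧
      ∀ a ∈ A, ∀ b ∈ W, b ∉ A → ¬ G.Adj a b := by
  intro t
  induction t using Nat.strong_induction_on with
  | _ t ih =>
    intro W chip htW
    rcases Nat.eq_zero_or_pos t with h0 | hpos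
    · subst h0
      exact ⟨∅, Finset.empty_subset _, by omega, by simp, by simp⟩
    have hWne : W.Nonempty := Finset.card_pos.mp (lt_of_lt_of_le hpos htW)
    obtain ⟨Q, hQW, hQne, hQs, hQanti⟩ := chip W (Finset.Subset.refl W) hWne
    by_cases hQt : t ≤ Q.card
    · exact ⟨Q, hQW, hQt, by omega, fun a ha b hb hbn => hQanti a ha b hb hbn⟩
    · have hQpos : 1 ≤ Q.card := Finset.card_pos.mpr hQne
      have hcards : (W \ Q).card = W.card - Q.card := Finset.card_sdiff_of_subset hQW
      obtain ⟨A', hA'sub, h1, h2, h3⟩ := ih (t - Q.card) (by omega) (W \ Q)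
        (fun W' hW' hne => chip W' (hW'.trans Finset.sdiff_subset) hne)
        (by omega)
      have hdisj : Disjoint A' Q := Finset.disjoint_left.mpr
        (fun a haA' haQ => (Finset.mem_sdiff.mp (hA'sub haA')).2 haQ)
      refine ⟨A' ∪ Q, Finset.union_subset (hA'sub.trans Finset.sdiff_subset) hQW, ?_, ?_, ?_⟩
      · rw [Finset.card_union_of_disjoint hdisj]; omega
      · rw [Finset.card_union_of_disjoint hdisj]; omega
      · intro a ha b hb hbn
        rcases Finset.mem_union.mp ha with haA' | haQ
        · exact h3 a haA' b
            (Finset.mem_sdiff.mpr ⟨hb, fun hbQ => hbn (Finset.mem_union_right _ hbQ)⟩)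
            (fun hbA' => hbn (Finset.mem_union_left _ hbA'))
        · exact hQanti a haQ b hb (fun hbQ => hbn (Finset.mem_union_right _ hbQ))

/-- split a set with small anticomplete chips into an anticomplete pair -/
lemma split (t s : ℕ) (hs : 1 ≤ s) (W : Finset V)
    (hW : 2 * t + s ≤ W.card + 1)
    (chip : ∀ W' ⊆ W, W'.Nonempty → ∃ Q, Q ⊆ W' ∧ Q.Nonempty ∧ Q.card ≤ s ∧
        (∀ q ∈ Q, ∀ r ∈ W', r ∉ Q → ¬ G.Adj q r)) :
    ∃ A B : Finset V, Disjoint A B ∧ (∀ a ∈ A, ∀ b ∈ B, ¬ G.Adj a b) ∧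
      t ≤ A.card ∧ t ≤ B.card := by
  obtain ⟨A, hAW, h1, h2, h3⟩ := extract s hs t W chip (by omega)
  refine ⟨A, W \ A, Finset.disjoint_sdiff, ?_, h1, ?_⟩
  · intro a ha b hb
    exact h3 a ha b (Finset.mem_sdiff.mp hb).1 (Finset.mem_sdiff.mp hb).2
  · rw [Finset.card_sdiff_of_subset hAW]; omega

end Stmt18Aux3

namespace Stmt18Aux2
open Finset
open scoped Classical
variable {V : Type} [Fintype V] {G : SimpleGraph V}

lemma chip_of_cl {σ : ℕ} {Amb : Finset V} (h : ∀ a ∈ Amb, (cl G Amb a).card ≤ σ) :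
    ∀ W' ⊆ Amb, W'.Nonempty → ∃ Q, Q ⊆ W' ∧ Q.Nonempty ∧ Q.card ≤ σ ∧
      (∀ q ∈ Q, ∀ r ∈ W', r ∉ Q → ¬ G.Adj q r) := by
  rintro W' hsub ⟨a, ha⟩
  refine ⟨cl G W' a, cl_subset, ⟨a, mem_cl_self ha⟩, ?_, ?_⟩
  · exact le_trans (Finset.card_le_card (cl_mono hsub)) (h a (hsub ha))
  · intro q hq r hr hrn
    exact not_adj_of_cl hq hr hrn

end Stmt18Aux2


open Finset Stmt18Aux Stmt18Aux2 Stmt18Aux3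

/-- There exists `η ∈ (0, 1/4]` such that every `η`-sparse `P₅`-free graph
`F` with `|F| ≥ 2` contains an anticomplete pair `(A,B)` with `|A|, |B| ≥ η|F|`. -/
theorem stmt_18 : ∃ η : ℝ, 0 < η ∧ η ≤ 1/4 ∧
    ∀ (V : Type) [Fintype V] (F : SimpleGraph V), P5Free F → EpsSparse η F →
      2 ≤ Fintype.card V →
      ∃ A B : Finset V, AnticompletePair F A B ∧
        η * (Fintype.card V : ℝ) ≤ A.card ∧ η * (Fintype.card V : ℝ) ≤ B.card := by
  classical
  refine ⟨1/16, by norm_num, by norm_num, ?_⟩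
  intro V _ F hP5 hsp hcard2
  set n := Fintype.card V with hn
  -- translate the sparsity hypothesis to `nbr`
  have hdegR : ∀ v : V, ((nbr F v).card : ℝ) ≤ (n : ℝ) / 16 := by
    intro v
    have h1 := hsp v
    have h2 : (F.neighborSet v).toFinset = nbr F v := by
      ext u
      simp [nbr, SimpleGraph.mem_neighborSet]
    rw [Set.ncard_eq_toFinset_card', h2] at h1
    have : (1:ℝ)/16 * n = (n:ℝ)/16 := by ring
    rw [this] at h1
    exact h1
  by_cases hsmall : (n : ℝ) < 16
  · -- tiny case: the graph is edgeless
    have hnoadj : ∀ u v : V, ¬ F.Adj u v := by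
      intro u v hadj
      have hm : v ∈ nbr F u := mem_nbr.mpr hadj
      have h1 : (1 : ℝ) ≤ ((nbr F u).card : ℝ) := by
        exact_mod_cast Finset.card_pos.mpr ⟨v, hm⟩
      have h2 : (2 : ℝ) ≤ (n : ℝ) := by exact_mod_cast hcard2
      have := hdegR u
      -- n < 16 and 2 ≤ n gives n/16 < 1
      linarith
    obtain ⟨a, b, hab⟩ := Fintype.exists_pair_of_one_lt_card (by omega : 1 < Fintype.card V)
    refine ⟨{a}, {b}, ⟨Finset.disjoint_singleton.mpr hab, by simp [hnoadj]⟩, ?_, ?_⟩ <;>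
    · simp only [Finset.card_singleton, Nat.cast_one]
      linarith
  push_neg at hsmall
  -- main case: n ≥ 16
  set t : ℕ := ⌈(n:ℝ)/16⌉₊ with ht_def
  set s : ℕ := ⌊(n:ℝ)/16⌋₊ + 1 with hs_def
  have hn16pos : (0:ℝ) < (n:ℝ)/16 := by linarith
  have ht_lb : (1/16 : ℝ) * n ≤ t := by
    have := Nat.le_ceil ((n:ℝ)/16); linarith
  have ht_ub : (t : ℝ) < (n:ℝ)/16 + 1 := Nat.ceil_lt_add_one (le_of_lt hn16pos)
  have hs_ub : (s : ℝ) ≤ (n:ℝ)/16 + 1 := by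
    have := Nat.floor_le (le_of_lt hn16pos)
    rw [hs_def]
    push_cast
    linarith
  have ht1 : 1 ≤ t := Nat.one_le_iff_ne_zero.mpr (by
    intro h0
    rw [ht_def] at h0
    have := Nat.ceil_eq_zero.mp h0
    linarith)
  have hs1 : 1 ≤ s := by omega
  have hdegN : ∀ v : V, (nbr F v).card + 1 ≤ s := by
    intro v
    have : (nbr F v).card ≤ ⌊(n:ℝ)/16⌋₊ := Nat.le_floor (hdegR v)
    omega
  have f7 : 4 * t + 3 * s ≤ n + 4 := by
    have h : 4 * (t:ℝ) + 3 * (s:ℝ) ≤ (n : ℝ) + 4 := by linarith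
    exact_mod_cast h
  have huniv : (Finset.univ : Finset V).card = n := Finset.card_univ
  -- helper to finish from a pair with cards ≥ t
  have finish : ∀ A B : Finset V, Disjoint A B → (∀ a ∈ A, ∀ b ∈ B, ¬ F.Adj a b) →
      t ≤ A.card → t ≤ B.card →
      ∃ A B : Finset V, AnticompletePair F A B ∧
        1/16 * (n : ℝ) ≤ A.card ∧ 1/16 * (n : ℝ) ≤ B.card := by
    intro A B hd ha h1 h2
    refine ⟨A, B, ⟨hd, ha⟩, ?_, ?_⟩
    · exact le_trans ht_lb (by exact_mod_cast h1)
    · exact le_trans ht_lb (by exact_mod_cast h2)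
  by_cases hall : ∀ a : V, (cl F Finset.univ a).card < t
  · -- all components of the graph are small: split
    obtain ⟨A, B, hd, hanti, h1, h2⟩ := split (G := F) t t ht1 Finset.univ
      (by omega)
      (chip_of_cl (fun a _ => le_of_lt (hall a)))
    exact finish A B hd hanti h1 h2
  push_neg at hall
  obtain ⟨v, hCt⟩ := hall
  set C := cl F Finset.univ v with hC_def
  have hCn : C.card ≤ n := huniv ▸ Finset.card_le_card (Finset.subset_univ C)
  have hCrest : (Finset.univ \ C).card = n - C.card := by
    rw [Finset.card_sdiff_of_subset (Finset.subset_univ C), huniv]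
  by_cases hrest : t ≤ (Finset.univ \ C).card
  · -- the component C vs the rest
    refine finish C (Finset.univ \ C) Finset.disjoint_sdiff ?_ hCt hrest
    intro a ha b hb
    exact not_adj_of_cl ha (Finset.mem_univ b) (Finset.mem_sdiff.mp hb).2
  push_neg at hrest
  set Nv := insert v (nbr F v) with hNv_def
  set D' := C \ Nv with hD'_def
  have hNvcard : Nv.card ≤ s := le_trans (Finset.card_insert_le _ _) (hdegN v)
  have hCD' : C.card ≤ D'.card + s := by
    have hsub : C ⊆ D' ∪ Nv := by
      intro c hc
      by_cases hcn : c ∈ Nv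
      · exact Finset.mem_union_right _ hcn
      · exact Finset.mem_union_left _ (Finset.mem_sdiff.mpr ⟨hc, hcn⟩)
    calc C.card ≤ (D' ∪ Nv).card := Finset.card_le_card hsub
      _ ≤ D'.card + Nv.card := Finset.card_union_le _ _
      _ ≤ D'.card + s := by omega
  have hD'v : ∀ d ∈ D', ¬ F.Adj v d ∧ d ≠ v := by
    intro d hd
    have hdn := (Finset.mem_sdiff.mp hd).2
    constructor
    · intro hadj
      exact hdn (Finset.mem_insert_of_mem (mem_nbr.mpr hadj))
    · intro hdv
      exact hdn (hdv ▸ Finset.mem_insert_self v _)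
  by_cases hall2 : ∀ b ∈ D', (cl F D' b).card < t
  · obtain ⟨A, B, hd, hanti, h1, h2⟩ := split (G := F) t t ht1 D'
      (by omega)
      (chip_of_cl (fun a ha => le_of_lt (hall2 a ha)))
    exact finish A B hd hanti h1 h2
  push_neg at hall2
  obtain ⟨b, hbD', hDt⟩ := hall2
  set D := cl F D' b with hD_def
  have hDsub : D ⊆ D' := cl_subset
  have hDD' : (D' \ D).card = D'.card - D.card := Finset.card_sdiff_of_subset hDsub
  have hDcard_le : D.card ≤ D'.card := Finset.card_le_card hDsub
  by_cases hrest2 : t ≤ (D' \ D).card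
  · refine finish D (D' \ D) Finset.disjoint_sdiff ?_ hDt hrest2
    intro a ha b' hb'
    exact not_adj_of_cl ha (Finset.mem_sdiff.mp hb').1 (Finset.mem_sdiff.mp hb').2
  push_neg at hrest2
  -- find the neighbor w of v attached to D
  have hbC : b ∈ C := (Finset.sdiff_subset) hbD'
  have hvb : RWrel F Finset.univ v b := (mem_cl.mp hbC).2
  have hvD : v ∉ D := fun h => ((hD'v v (hDsub h)).2 rfl)
  have hbD : b ∈ D := mem_cl_self hbD'
  obtain ⟨p, hpD, q, _, hpq, hqD⟩ := exists_exit (rw_symm hvb) hbD hvD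
  have hpC : p ∈ C := Finset.sdiff_subset (hDsub hpD)
  have hqC : q ∈ C := cl_adj_closed hpC hpq (Finset.mem_univ q)
  have hqNv : q ∈ Nv := by
    by_contra hqNv
    exact hqD (cl_adj_closed hpD hpq (Finset.mem_sdiff.mpr ⟨hqC, hqNv⟩))
  have hqv : q ≠ v := by
    rintro rfl
    exact (hD'v p (hDsub hpD)).1 hpq.symm
  have hvq : F.Adj v q := by
    rcases Finset.mem_insert.mp hqNv with h | h
    · exact absurd h hqv
    · exact mem_nbr.mp h
  set U := (nbr F q) ∩ D with hU_def
  set Z := D \ U with hZ_def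
  have hUD : U ⊆ D := Finset.inter_subset_right
  have hpU : p ∈ U := Finset.mem_inter.mpr ⟨mem_nbr.mpr hpq.symm, hpD⟩
  have hDadj : ∀ d ∈ D, ¬ F.Adj v d := fun d hd => (hD'v d (hDsub hd)).1
  have hZw : ∀ z ∈ Z, ¬ F.Adj q z := by
    intro z hz hadj
    exact (Finset.mem_sdiff.mp hz).2
      (Finset.mem_inter.mpr ⟨mem_nbr.mpr hadj, (Finset.mem_sdiff.mp hz).1⟩)
  have trap : ∀ p' ∈ Z, ∀ x ∈ U, F.Adj x p' → ∀ q' ∈ Z, F.Adj p' q' → F.Adj x q' := by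
    intro p' hp' x hx hxp' q' hq' hp'q'
    by_contra hxq'
    have hxw : F.Adj q x := mem_nbr.mp (Finset.mem_inter.mp hx).1
    have hxD : x ∈ D := (Finset.mem_inter.mp hx).2
    have hp'D : p' ∈ D := (Finset.mem_sdiff.mp hp').1
    have hq'D : q' ∈ D := (Finset.mem_sdiff.mp hq').1
    exact noP5 hP5 hvq hxw hxp' hp'q'
      (hDadj x hxD) (hDadj p' hp'D) (hDadj q' hq'D)
      (hZw p' hp') (hZw q' hq') hxq'
      (fun h => hvD (h ▸ hxD)) (fun h => hvD (h ▸ hp'D)) (fun h => hvD (h ▸ hq'D))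
      (fun h => hqD (h ▸ hp'D)) (fun h => hqD (h ▸ hq'D))
      (fun h => (Finset.mem_sdiff.mp hq').2 (h ▸ hx))
  have chipZbound : ∀ c ∈ Z, (cl F Z c).card ≤ s := by
    intro c hc
    have hcD : c ∈ D := (Finset.mem_sdiff.mp hc).1
    have h1 : RWrel F D b c := rw_cl hbD' (mem_cl.mp hcD).2
    have h2 : RWrel F D b p := rw_cl hbD' (mem_cl.mp hpD).2
    have h3 : RWrel F D c p := rw_trans (rw_symm h1) h2
    obtain ⟨y, hyZ, x, hxU, hxy, hrwy⟩ := exists_boundary h3 hc hpU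
    have hsub2 : cl F Z c ⊆ insert x (nbr F x) := by
      intro d hd
      have hyd : RWrel F Z y d := rw_trans (rw_symm hrwy) (mem_cl.mp hd).2
      have hadj : F.Adj x d := by
        clear hd
        induction hyd with
        | refl => exact hxy
        | @tail m e h1' h2' ih => exact trap m h2'.2.1 x hxU ih e h2'.2.2 h2'.1
      exact Finset.mem_insert_of_mem (mem_nbr.mpr hadj)
    calc (cl F Z c).card ≤ (insert x (nbr F x)).card := Finset.card_le_card hsub2
      _ ≤ (nbr F x).card + 1 := Finset.card_insert_le _ _
      _ ≤ s := hdegN x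
  have hUc : U.card + 1 ≤ s :=
    le_trans (by
      have : U.card ≤ (nbr F q).card := Finset.card_le_card Finset.inter_subset_left
      omega) (hdegN q)
  have hZc : Z.card = D.card - U.card := Finset.card_sdiff_of_subset hUD
  have hUDc : U.card ≤ D.card := Finset.card_le_card hUD
  obtain ⟨A, B, hd, hanti, h1, h2⟩ := split (G := F) t s hs1 Z
    (by omega)
    (chip_of_cl chipZbound)
  exact finish A B hd hanti h1 h2
end
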